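/- arXiv:2407.01089 — 2 statements merged into one kernel-verified Lean document; each statement's English description precedes it below -/
import Mathlib

section
/- For the polynomial p(x) = a x² + b x + 1, if a + b + 1 > 0 and b ≥ -2, then p has no root in the closed interval [0, 1]. -/
theorem stmt_3 (a b : ℝ) (h : 0 < a + b + 1) (hb : -2 ≤ b) :
    ∀ x : ℝ, x ∈ Set.Icc (0:ℝ) 1 → a * x ^ 2 + b * x + 1 ≠ 0 := by
  rintro x ⟨hx0, hx1⟩ hc
  have key : a * x ^ 2 + b * x + 1
      = x ^ 2 * (a + b + 1) + (1 - x) * (1 + x * (b + 1)) := by ring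
  have h2 : (0:ℝ) ≤ 1 + x * (b + 1) := by nlinarith
  rcases eq_or_lt_of_le hx0 with rfl | hx0'
  · norm_num at hc
  · have t1 : 0 < x ^ 2 * (a + b + 1) := by positivity
    have t2 : 0 ≤ (1 - x) * (1 + x * (b + 1)) :=
      mul_nonneg (by linarith) h2
    linarith
end

section
/- For the polynomial p(x) = a x² + b x + 1, if a + b + 1 > 0, b < -2, and 4a < b², then p has exactly two roots in [0, 1], both lying in the open interval (0, 1). -/
theorem stmt_6 (a b : ℝ) (h : 0 < a + b + 1) (hb : b < -2) (hd : 4 * a < b ^ 2) :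
    ∃ x₁ x₂ : ℝ, x₁ ≠ x₂ ∧ x₁ ∈ Set.Ioo (0:ℝ) 1 ∧ x₂ ∈ Set.Ioo (0:ℝ) 1 ∧
      a * x₁ ^ 2 + b * x₁ + 1 = 0 ∧ a * x₂ ^ 2 + b * x₂ + 1 = 0 ∧
      ∀ y : ℝ, y ∈ Set.Icc (0:ℝ) 1 → a * y ^ 2 + b * y + 1 = 0 → y = x₁ ∨ y = x₂ := by
  have ha : 1 < a := by linarith
  have ha0 : 0 < a := by linarith
  set d : ℝ := b ^ 2 - 4 * a with hd_def
  have hd0 : 0 < d := by simp [hd_def]; linarith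
  set s : ℝ := Real.sqrt d with hs_def
  have hs2 : s ^ 2 = d := Real.sq_sqrt hd0.le
  have hs0 : 0 < s := Real.sqrt_pos.mpr hd0
  have h2ab : 0 < 2 * a + b := by linarith
  have hsb : s < -b := by nlinarith
  have hs2ab : s < 2 * a + b := by nlinarith
  refine ⟨(-b - s) / (2 * a), (-b + s) / (2 * a), ?_, ?_, ?_, ?_, ?_, ?_⟩
  · intro heq
    have : -b - s = -b + s := by
      field_simp at heq; linarith [heq]
    linarith
  · constructor
    · exact div_pos (by linarith) (by linarith)
    · rw [div_lt_one (by linarith)]; linarith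
  · constructor
    · exact div_pos (by linarith) (by linarith)
    · rw [div_lt_one (by linarith)]; linarith
  · field_simp
    nlinarith [hs2]
  · field_simp
    nlinarith [hs2]
  · intro y _ hy
    have key : ((y - (-b - s) / (2 * a)) * (y - (-b + s) / (2 * a))) = 0 := by
      have hne : (2 * a) ≠ 0 := by positivity
      field_simp
      nlinarith [hs2, hy]
    rcases mul_eq_zero.mp key with h1 | h1
    · left; linarith
    · right; linarith
end
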